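/- For d > 2 and α > 0, define F_α : ℝ^d → ℝ^d by F_α(x) = x/(α‖x‖²) for x ≠ 0 and F_α(0) = 0. Then for X standard Gaussian in ℝ^d, E[‖F_α(X)‖²] = 1/(α²(d−2)), and consequently E[‖F_α(X)‖²] → 0 as α → ∞. -/

import Mathlib

open MeasureTheory Real Filter
open scoped Classical

/-- The map `F_α(x) = x / (α ‖x‖²)` for `x ≠ 0`, `F_α(0) = 0`. -/

noncomputable def Fmap (d : ℕ) (α : ℝ) (x : EuclideanSpace ℝ (Fin d)) :
    EuclideanSpace ℝ (Fin d) :=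
  if x = 0 then 0 else (α * ‖x‖ ^ 2)⁻¹ • x

/-! In polar coordinates a radial Gaussian moment `∫ ‖x‖^s e^{-‖x‖²/2} dx` is a multiple,
independent of `s`, of `∫_0^∞ r^{n-1+s} e^{-r²/2} dr`, a Gamma value; the recursion
`Γ(t + 1) = t Γ(t)` then gives `∫ ‖x‖^{s+2} e^{-‖x‖²/2} = (n + s) ∫ ‖x‖^s e^{-‖x‖²/2}`.
At `s = -2` this reads `E[‖X‖⁻²] = 1 / (n - 2)`, and `‖F_α x‖² = α⁻² ‖x‖⁻²`. -/

open Module Set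

theorem integral_rpow_add_two_mul_exp_neg_sq_div_two {a : ℝ} (ha : -1 < a) :
    ∫ r in Ioi (0 : ℝ), r ^ (a + 2) * exp (-r ^ 2 / 2) =
      (a + 1) * ∫ r in Ioi (0 : ℝ), r ^ a * exp (-r ^ 2 / 2) := by
  have hexp (r : ℝ) : exp (-r ^ 2 / 2) = exp (-(1 / 2) * r ^ (2 : ℝ)) := by
    rw [rpow_two]; ring_nf
  simp_rw [hexp]
  rw [integral_rpow_mul_exp_neg_mul_rpow two_pos (by linarith) (by norm_num),
    integral_rpow_mul_exp_neg_mul_rpow two_pos ha (by norm_num),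
    show (a + 2 + 1) / 2 = (a + 1) / 2 + 1 by ring,
    show -(a + 2 + 1) / 2 = -(a + 1) / 2 + -1 by ring,
    Gamma_add_one (by linarith : 0 < (a + 1) / 2).ne',
    rpow_add (by norm_num), rpow_neg_one]
  ring

section RadialGaussianMoments

variable {E : Type*} [NormedAddCommGroup E] [NormedSpace ℝ E] [Nontrivial E]
  [FiniteDimensional ℝ E] [MeasurableSpace E] [BorelSpace E] (μ : Measure E) [μ.IsAddHaarMeasure]

theorem integral_norm_rpow_mul_exp_neg_sq_div_two (s : ℝ) :
    ∫ x, ‖x‖ ^ s * exp (-‖x‖ ^ 2 / 2) ∂μ =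
      finrank ℝ E * μ.real (Metric.ball 0 1) *
        ∫ r in Ioi (0 : ℝ), r ^ ((finrank ℝ E : ℝ) - 1 + s) * exp (-r ^ 2 / 2) := by
  rw [integral_fun_norm_addHaar μ fun r => r ^ s * exp (-r ^ 2 / 2), nsmul_eq_mul, smul_eq_mul,
    mul_assoc]
  congr 2
  refine setIntegral_congr_fun measurableSet_Ioi fun r (hr : 0 < r) => ?_
  rw [smul_eq_mul, ← mul_assoc, rpow_add hr, ← rpow_natCast,
    Nat.cast_sub (finrank_pos (R := ℝ) (M := E)), Nat.cast_one]

theorem integral_norm_rpow_add_two_mul_exp_neg_sq_div_two {s : ℝ}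
    (hs : -(finrank ℝ E : ℝ) < s) :
    ∫ x, ‖x‖ ^ (s + 2) * exp (-‖x‖ ^ 2 / 2) ∂μ =
      (finrank ℝ E + s) * ∫ x, ‖x‖ ^ s * exp (-‖x‖ ^ 2 / 2) ∂μ := by
  rw [integral_norm_rpow_mul_exp_neg_sq_div_two, integral_norm_rpow_mul_exp_neg_sq_div_two,
    ← add_assoc, integral_rpow_add_two_mul_exp_neg_sq_div_two (by linarith)]
  ring

end RadialGaussianMoments

theorem integral_exp_neg_sq_norm_div_two {V : Type*} [NormedAddCommGroup V]
    [InnerProductSpace ℝ V] [FiniteDimensional ℝ V] [MeasurableSpace V] [BorelSpace V] :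
    ∫ x : V, exp (-‖x‖ ^ 2 / 2) = (2 * π) ^ (finrank ℝ V / 2 : ℝ) := by
  rw [show 2 * π = π / (1 / 2) by ring,
    ← GaussianFourier.integral_rexp_neg_mul_sq_norm (by norm_num : (0 : ℝ) < 1 / 2)]
  congr 1 with x
  ring_nf

theorem integral_inv_norm_sq_mul_stdGaussianDensity {V : Type*} [NormedAddCommGroup V]
    [InnerProductSpace ℝ V] [FiniteDimensional ℝ V] [MeasurableSpace V] [BorelSpace V]
    (hV : 2 < finrank ℝ V) :
    ∫ x : V, (‖x‖ ^ 2)⁻¹ * ((2 * π) ^ (-(finrank ℝ V : ℝ) / 2) * exp (-‖x‖ ^ 2 / 2)) =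
      1 / ((finrank ℝ V : ℝ) - 2) := by
  have : Nontrivial V := Module.nontrivial_of_finrank_pos (R := ℝ) (by omega)
  have hV' : (2 : ℝ) < finrank ℝ V := by exact_mod_cast hV
  have hmoment := integral_norm_rpow_add_two_mul_exp_neg_sq_div_two (volume : Measure V)
    (s := -2) (by linarith)
  rw [neg_add_cancel, ← sub_eq_add_neg] at hmoment
  simp only [rpow_zero, one_mul, integral_exp_neg_sq_norm_div_two] at hmoment
  have hinv (x : V) : (‖x‖ ^ 2)⁻¹ = ‖x‖ ^ (-2 : ℝ) := by
    rw [rpow_neg (norm_nonneg x), rpow_two]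
  have hnormalize : (2 * π) ^ (-(finrank ℝ V : ℝ) / 2) * (2 * π) ^ (finrank ℝ V / 2 : ℝ) = 1 := by
    rw [← rpow_add (by positivity), neg_div, neg_add_cancel, rpow_zero]
  calc ∫ x : V, (‖x‖ ^ 2)⁻¹ * ((2 * π) ^ (-(finrank ℝ V : ℝ) / 2) * exp (-‖x‖ ^ 2 / 2))
      = (2 * π) ^ (-(finrank ℝ V : ℝ) / 2) * ∫ x : V, ‖x‖ ^ (-2 : ℝ) * exp (-‖x‖ ^ 2 / 2) := by
        rw [← integral_const_mul]
        congr 1 with x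
        rw [hinv]
        ring
    _ = 1 / ((finrank ℝ V : ℝ) - 2) := by
        rw [eq_div_iff (by linarith), mul_assoc, mul_comm (∫ _, _), ← hmoment,
          hnormalize]

theorem norm_Fmap_sq (d : ℕ) (α : ℝ) (x : EuclideanSpace ℝ (Fin d)) :
    ‖Fmap d α x‖ ^ 2 = (α ^ 2 * ‖x‖ ^ 2)⁻¹ := by
  rcases eq_or_ne x 0 with rfl | hx
  · simp [Fmap]
  rw [Fmap, if_neg hx, norm_smul, mul_pow, norm_inv, norm_mul, Real.norm_eq_abs, inv_pow,
    mul_pow, sq_abs, norm_pow, norm_norm]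
  field_simp [norm_ne_zero_iff.mpr hx]

/-- For `d > 2` and `α > 0`, with `X` standard Gaussian in `ℝ^d`,
`E[‖F_α(X)‖²] = 1/(α²(d−2))`, and consequently this loss tends to `0` as `α → ∞`. -/
theorem deepSVDD_loss_of_Fmap (d : ℕ) (hd : 2 < d) :
    (∀ α : ℝ, 0 < α →
      ∫ x : EuclideanSpace ℝ (Fin d),
        ‖Fmap d α x‖ ^ 2 * ((2 * π) ^ (-(d : ℝ) / 2) * Real.exp (-‖x‖ ^ 2 / 2)) =
        1 / (α ^ 2 * ((d : ℝ) - 2))) ∧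
    Tendsto (fun α : ℝ =>
      ∫ x : EuclideanSpace ℝ (Fin d),
        ‖Fmap d α x‖ ^ 2 * ((2 * π) ^ (-(d : ℝ) / 2) * Real.exp (-‖x‖ ^ 2 / 2)))
      atTop (nhds 0) := by
  have hmoment := integral_inv_norm_sq_mul_stdGaussianDensity (V := EuclideanSpace ℝ (Fin d))
    (by rwa [finrank_euclideanSpace_fin])
  rw [finrank_euclideanSpace_fin] at hmoment
  have hloss (α : ℝ) : ∫ x : EuclideanSpace ℝ (Fin d),
      ‖Fmap d α x‖ ^ 2 * ((2 * π) ^ (-(d : ℝ) / 2) * Real.exp (-‖x‖ ^ 2 / 2)) =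
        1 / (α ^ 2 * ((d : ℝ) - 2)) := by
    simp_rw [norm_Fmap_sq, mul_inv, mul_assoc]
    rw [integral_const_mul, hmoment, one_div, one_div, mul_inv]
  refine ⟨fun α _ => hloss α, ?_⟩
  simp_rw [hloss, one_div]
  have hd' : (0 : ℝ) < d - 2 := by linarith [show (2 : ℝ) < d by exact_mod_cast hd]
  exact ((tendsto_pow_atTop two_ne_zero).atTop_mul_const hd').inv_tendsto_atTop
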